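/- arXiv:2512.05612 — 4 statements merged into one kernel-verified Lean document; each statement's English description precedes it below -/
import Mathlib

section
/- Let μ be a finite positive measure on ℝⁿ satisfying the Carleman condition and let f ∈ L²(μ) with f ≥ 0 μ-a.e. Then the measure ν with dν = f dμ satisfies the Carleman condition; in particular, for each coordinate i, ∫ x_i^{2k} f dμ ≤ ‖f‖_{L²(μ)} (∫ x_i^{4k} dμ)^{1/2} < ∞ for all k. -/
/-!
Write `‖·‖_p` for `eLpNorm`. The `k`-th Carleman term of a measure in the coordinate `xᵢ` is
`‖xᵢ‖_{2k}⁻¹`. By Cauchy–Schwarz, `‖xᵢ‖_{L^{2k}(f μ)}^{2k} ≤ ‖f‖₂ ‖xᵢ‖_{L^{4k}(μ)}^{2k}`, so the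
Carleman series of `f μ` dominates a constant multiple of the subseries of `μ`'s series over the
even indices. Since `μ` is finite, Lyapunov's inequality makes `p ↦ ‖xᵢ‖_p` nondecreasing up to
the factor `max 1 (μ univ)`, hence that subseries diverges together with the full series. The same
monotonicity shows that all moments of `μ` are finite (an infinite one would leave only finitely
many nonzero terms), which makes the Bochner integrals in the moment bound meaningful.
-/

open MeasureTheory

/-- The multivariate Carleman condition for a measure on ℝⁿ. -/
def SatisfiesCarleman (n : ℕ) (ν : Measure (Fin n → ℝ)) : Prop :=
  ∀ i : Fin n,
    ∑' k : ℕ,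
      (∫⁻ x, ENNReal.ofReal ((x i) ^ (2 * (k + 1))) ∂ν) ^ (-1 / (2 * ((k : ℝ) + 1))) = ⊤

open ENNReal

namespace ENNReal

theorem ofReal_pow_two_mul (t : ℝ) (m : ℕ) : ENNReal.ofReal (t ^ (2 * m)) = ‖t‖ₑ ^ (2 * m) := by
  rw [← (even_two_mul m).pow_abs, ENNReal.ofReal_pow (abs_nonneg t), Real.enorm_eq_ofReal_abs]

theorem rpow_le_max_one (x : ℝ≥0∞) {e : ℝ} (h0 : 0 ≤ e) (h1 : e ≤ 1) : x ^ e ≤ max 1 x := by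
  rcases le_total x 1 with hx | hx
  · exact (rpow_le_one hx h0).trans (le_max_left _ _)
  · exact (rpow_le_rpow_of_exponent_le hx h1).trans_eq (rpow_one x) |>.trans (le_max_right _ _)

theorem le_rpow_inv_mul_of_pow_le_mul_pow {x y c : ℝ≥0∞} {n : ℕ} (hn : n ≠ 0)
    (h : x ^ n ≤ c * y ^ n) : x ≤ c ^ (n⁻¹ : ℝ) * y := by
  rwa [← ENNReal.pow_le_pow_left_iff hn, mul_pow, ← rpow_natCast (c ^ _), ← rpow_mul,
    inv_mul_cancel₀ (by exact_mod_cast hn), rpow_one]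

theorem inv_le_mul_inv_of_le_mul {a b K : ℝ≥0∞} (hK0 : K ≠ 0) (hK : K ≠ ⊤) (h : b ≤ K * a) :
    a⁻¹ ≤ K * b⁻¹ := by
  calc a⁻¹ = K * (K * a)⁻¹ := by
        rw [ENNReal.mul_inv (.inl hK0) (.inl hK), ← mul_assoc, ENNReal.mul_inv_cancel hK0 hK,
          one_mul]
    _ ≤ K * b⁻¹ := by gcongr

theorem eq_top_of_top_le_mul {K S : ℝ≥0∞} (hK : K ≠ ⊤) (h : ⊤ ≤ K * S) : S = ⊤ :=
  ((mul_eq_top.mp (top_unique h)).resolve_right fun h => hK h.1).2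

variable {a b : ℕ → ℝ≥0∞} {K : ℝ≥0∞}

theorem tsum_inv_eq_top_of_le_mul (hK0 : K ≠ 0) (hK : K ≠ ⊤) (hb : ∀ k, b k ≤ K * a k)
    (ha : ∑' k, (a k)⁻¹ = ⊤) : ∑' k, (b k)⁻¹ = ⊤ := by
  refine eq_top_of_top_le_mul hK ?_
  calc ⊤ = ∑' k, (a k)⁻¹ := ha.symm
    _ ≤ ∑' k, K * (b k)⁻¹ := ENNReal.tsum_le_tsum fun k => inv_le_mul_inv_of_le_mul hK0 hK (hb k)
    _ = K * ∑' k, (b k)⁻¹ := ENNReal.tsum_mul_left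

theorem ne_top_of_tsum_inv_eq_top (hK : K ≠ ⊤) (ha0 : ∀ k, a k ≠ 0)
    (ha : ∀ k, a k ≤ K * a (k + 1)) (h : ∑' k, (a k)⁻¹ = ⊤) (j : ℕ) : a j ≠ ⊤ := by
  intro hj
  have htail : ∀ m, a (j + m) = ⊤ := by
    intro m
    induction m with
    | zero => exact hj
    | succ m ih =>
      by_contra hm
      exact mul_ne_top hK hm (top_unique (ih ▸ ha (j + m)))
  have hfinite : ∑' k, (a k)⁻¹ = ∑ k ∈ Finset.range j, (a k)⁻¹ := by
    refine tsum_eq_sum fun k hk => ?_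
    obtain ⟨m, rfl⟩ := Nat.exists_eq_add_of_le (not_lt.mp (Finset.mem_range.not.mp hk))
    rw [htail, inv_top]
  exact ENNReal.sum_ne_top.mpr (fun k _ => inv_ne_top.mpr (ha0 k)) (hfinite ▸ h)

theorem tsum_inv_comp_two_mul_add_one_eq_top (hK0 : K ≠ 0) (hK : K ≠ ⊤) (ha0 : a 0 ≠ 0)
    (ha : ∀ k, a k ≤ K * a (k + 1)) (h : ∑' k, (a k)⁻¹ = ⊤) :
    ∑' k, (a (2 * k + 1))⁻¹ = ⊤ := by
  have hsucc : ∑' k, (a (k + 1))⁻¹ = ⊤ := by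
    rw [tsum_eq_zero_add' ENNReal.summable] at h
    exact (add_eq_top.mp h).resolve_left (inv_ne_top.mpr ha0)
  refine eq_top_of_top_le_mul (add_ne_top.mpr ⟨one_ne_top, hK⟩) ?_
  calc ⊤ = ∑' k, (a (k + 1))⁻¹ := hsucc.symm
    _ = ∑' k, (a (2 * k + 1))⁻¹ + ∑' k, (a (2 * k + 1 + 1))⁻¹ :=
      (tsum_even_add_odd ENNReal.summable ENNReal.summable).symm
    _ ≤ ∑' k, (a (2 * k + 1))⁻¹ + ∑' k, K * (a (2 * k + 1))⁻¹ := by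
      gcongr with k
      exact inv_le_mul_inv_of_le_mul hK0 hK (ha _)
    _ = (1 + K) * ∑' k, (a (2 * k + 1))⁻¹ := by rw [ENNReal.tsum_mul_left, add_mul, one_mul]

end ENNReal

variable {α : Type*} [MeasurableSpace α] {μ : Measure α}

theorem lintegral_enorm_pow_eq_eLpNorm_pow {ε : Type*} [ENorm ε] (g : α → ε) {n : ℕ} (hn : n ≠ 0) :
    ∫⁻ x, ‖g x‖ₑ ^ n ∂μ = eLpNorm g n μ ^ n := by
  simpa using
    (eLpNorm_nnreal_pow_eq_lintegral (f := g) (μ := μ) (p := n) (by exact_mod_cast hn)).symm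

theorem lintegral_ofReal_pow_rpow_eq_inv_eLpNorm (g : α → ℝ) (k : ℕ) :
    (∫⁻ x, ENNReal.ofReal (g x ^ (2 * (k + 1))) ∂μ) ^ (-1 / (2 * ((k : ℝ) + 1))) =
      (eLpNorm g (2 * (k + 1) : ℕ) μ)⁻¹ := by
  simp_rw [ofReal_pow_two_mul]
  rw [lintegral_enorm_pow_eq_eLpNorm_pow g (by positivity), ← rpow_natCast, ← rpow_mul]
  push_cast
  rw [mul_div_cancel₀ _ (by positivity), ← rpow_neg_one]

theorem satisfiesCarleman_iff {n : ℕ} {ν : Measure (Fin n → ℝ)} :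
    SatisfiesCarleman n ν ↔ ∀ i, ∑' k : ℕ, (eLpNorm (fun x => x i) (2 * (k + 1) : ℕ) ν)⁻¹ = ⊤ := by
  simp only [SatisfiesCarleman, lintegral_ofReal_pow_rpow_eq_inv_eLpNorm]

theorem eLpNorm_le_max_one_measure_univ_mul {E : Type*} [NormedAddCommGroup E] {g : α → E}
    {p q : ℝ≥0∞} (hp : 1 ≤ p) (hpq : p ≤ q) (hg : AEStronglyMeasurable g μ) :
    eLpNorm g p μ ≤ max 1 (μ Set.univ) * eLpNorm g q μ := by
  have hexp₀ : 0 ≤ 1 / p.toReal - 1 / q.toReal := by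
    rcases eq_or_ne q ⊤ with rfl | hq
    · simp
    have hp_top : p ≠ ⊤ := ne_top_of_le_ne_top hq hpq
    exact sub_nonneg.mpr <| one_div_le_one_div_of_le
      (toReal_pos (one_pos.trans_le hp).ne' hp_top) (toReal_mono hq hpq)
  have hexp₁ : 1 / p.toReal - 1 / q.toReal ≤ 1 := by
    have : 1 / p.toReal ≤ 1 := by
      rcases eq_or_ne p ⊤ with rfl | hp_top
      · simp
      · exact div_le_one_of_le₀ (by simpa using toReal_mono hp_top hp) toReal_nonneg
    linarith [one_div_nonneg.mpr (toReal_nonneg (a := q))]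
  calc eLpNorm g p μ ≤ eLpNorm g q μ * μ Set.univ ^ (1 / p.toReal - 1 / q.toReal) :=
        eLpNorm_le_eLpNorm_mul_rpow_measure_univ hpq hg
    _ ≤ eLpNorm g q μ * max 1 (μ Set.univ) := by gcongr; exact rpow_le_max_one _ hexp₀ hexp₁
    _ = _ := mul_comm _ _

theorem eLpNorm_two_mul_le_max_one_measure_univ_mul {E : Type*} [NormedAddCommGroup E]
    {g : α → E} (hg : AEStronglyMeasurable g μ) (k : ℕ) :
    eLpNorm g (2 * (k + 1) : ℕ) μ ≤ max 1 (μ Set.univ) * eLpNorm g (2 * (k + 1 + 1) : ℕ) μ :=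
  eLpNorm_le_max_one_measure_univ_mul (by norm_cast; omega) (by norm_cast; omega) hg

theorem eLpNorm_pow {𝕜 : Type*} [NormedDivisionRing 𝕜] (g : α → 𝕜) {n : ℕ} (hn : n ≠ 0)
    (p : ℝ≥0∞) : eLpNorm (fun x => g x ^ n) p μ = eLpNorm g (p * n) μ ^ n := by
  have h := eLpNorm_norm_rpow (μ := μ) (p := p) g (q := n) (by positivity)
  rw [ofReal_natCast, rpow_natCast] at h
  rw [← h]
  exact eLpNorm_congr_norm_ae (.of_forall fun x => by simp)

theorem lintegral_enorm_withDensity_le {E : Type*} [NormedAddCommGroup E] [NormedSpace ℝ E]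
    {f : α → ℝ} {h : α → E} (hf : AEStronglyMeasurable f μ) (hf0 : 0 ≤ᵐ[μ] f)
    (hh : AEStronglyMeasurable h μ) :
    ∫⁻ x, ‖h x‖ₑ ∂(μ.withDensity fun x => ENNReal.ofReal (f x)) ≤
      eLpNorm f 2 μ * eLpNorm h 2 μ := by
  have : HolderTriple 2 2 1 := ⟨by rw [inv_one, inv_two_add_inv_two]⟩
  calc ∫⁻ x, ‖h x‖ₑ ∂(μ.withDensity fun x => ENNReal.ofReal (f x))
      = ∫⁻ x, ‖f x • h x‖ₑ ∂μ := by
        rw [lintegral_withDensity_eq_lintegral_mul₀ hf.aemeasurable.ennreal_ofReal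
          hh.enorm]
        refine lintegral_congr_ae ?_
        filter_upwards [hf0] with x hx
        rw [enorm_smul, Real.enorm_of_nonneg hx, Pi.mul_apply]
    _ = eLpNorm (fun x => f x • h x) 1 μ := eLpNorm_one_eq_lintegral_enorm.symm
    _ ≤ eLpNorm f 2 μ * eLpNorm h 2 μ := by
      simpa using eLpNorm_le_eLpNorm_mul_eLpNorm'_of_norm (p := 2) (q := 2) (r := 1) hf hh
        (· • ·) 1 (.of_forall fun x => by simp [norm_smul])

theorem eLpNorm_withDensity_ofReal_le {f g : α → ℝ} (hf : AEStronglyMeasurable f μ)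
    (hf0 : 0 ≤ᵐ[μ] f) (hg : AEStronglyMeasurable g μ) {m : ℕ} (hm : m ≠ 0) :
    eLpNorm g (2 * m : ℕ) (μ.withDensity fun x => ENNReal.ofReal (f x)) ≤
      max 1 (eLpNorm f 2 μ) * eLpNorm g (4 * m : ℕ) μ := by
  have hpow : eLpNorm g (2 * m : ℕ) (μ.withDensity fun x => ENNReal.ofReal (f x)) ^ (2 * m) ≤
      eLpNorm f 2 μ * eLpNorm g (4 * m : ℕ) μ ^ (2 * m) :=
    calc _ = ∫⁻ x, ‖g x ^ (2 * m)‖ₑ ∂(μ.withDensity fun x => ENNReal.ofReal (f x)) := by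
          simp_rw [enorm_pow]
          exact (lintegral_enorm_pow_eq_eLpNorm_pow g (by omega)).symm
      _ ≤ eLpNorm f 2 μ * eLpNorm (fun x => g x ^ (2 * m)) 2 μ :=
          lintegral_enorm_withDensity_le hf hf0 (hg.pow _)
      _ = _ := by
          rw [eLpNorm_pow g (by omega)]
          congr 3
          push_cast
          ring
  calc _ ≤ eLpNorm f 2 μ ^ (((2 * m : ℕ) : ℝ)⁻¹) * eLpNorm g (4 * m : ℕ) μ :=
        le_rpow_inv_mul_of_pow_le_mul_pow (by omega) hpow
    _ ≤ _ := by
        gcongr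
        exact rpow_le_max_one _ (by positivity) (inv_le_one_of_one_le₀ (by norm_cast; omega))

section FiniteMoments

variable [IsFiniteMeasure μ] {E : Type*} [NormedAddCommGroup E] {g : α → E}

theorem memLp_of_tsum_inv_eLpNorm_eq_top (hg : AEStronglyMeasurable g μ)
    (h : ∑' k : ℕ, (eLpNorm g (2 * (k + 1) : ℕ) μ)⁻¹ = ⊤) {p : ℝ≥0∞} (hp : p ≠ ⊤) :
    MemLp g p μ := by
  by_cases hg0 : g =ᵐ[μ] 0
  · exact (memLp_congr_ae hg0).mpr MemLp.zero
  obtain ⟨k, hk⟩ := ENNReal.exists_nat_gt hp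
  have hfin := ne_top_of_tsum_inv_eq_top (by finiteness)
    (fun k => (eLpNorm_eq_zero_iff hg (by positivity)).not.mpr hg0)
    (eLpNorm_two_mul_le_max_one_measure_univ_mul hg) h k
  exact MemLp.mono_exponent ⟨hg, hfin.lt_top⟩ (hk.le.trans (by norm_cast; omega))

theorem tsum_inv_eLpNorm_four_mul_eq_top (hg : AEStronglyMeasurable g μ)
    (h : ∑' k : ℕ, (eLpNorm g (2 * (k + 1) : ℕ) μ)⁻¹ = ⊤) :
    ∑' k : ℕ, (eLpNorm g (4 * (k + 1) : ℕ) μ)⁻¹ = ⊤ := by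
  by_cases hg0 : g =ᵐ[μ] 0
  · exact ENNReal.tsum_eq_top_of_eq_top ⟨0, by rw [eLpNorm_congr_ae hg0, eLpNorm_zero, inv_zero]⟩
  have := tsum_inv_comp_two_mul_add_one_eq_top (by positivity) (by finiteness)
    ((eLpNorm_eq_zero_iff hg (by positivity)).not.mpr hg0)
    (eLpNorm_two_mul_le_max_one_measure_univ_mul hg) h
  convert this using 5 with k
  congr 1
  ring

end FiniteMoments

theorem MeasureTheory.MemLp.eLpNorm_two_eq {f : α → ℝ} (hf : MemLp f 2 μ) :
    eLpNorm f 2 μ = ENNReal.ofReal ((∫ x, f x ^ 2 ∂μ) ^ ((1 : ℝ) / 2)) := by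
  rw [hf.eLpNorm_eq_integral_rpow_norm two_ne_zero ofNat_ne_top]
  simp [sq_abs]

theorem lintegral_ofReal_pow_withDensity_le [IsFiniteMeasure μ] {f g : α → ℝ} (hf : MemLp f 2 μ)
    (hf0 : 0 ≤ᵐ[μ] f) {k : ℕ} (hg : MemLp g (4 * k : ℕ) μ) :
    ∫⁻ x, ENNReal.ofReal (g x ^ (2 * k)) ∂(μ.withDensity fun x => ENNReal.ofReal (f x)) ≤
      ENNReal.ofReal
        ((∫ x, f x ^ 2 ∂μ) ^ ((1 : ℝ) / 2) * (∫ x, g x ^ (4 * k) ∂μ) ^ ((1 : ℝ) / 2)) := by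
  have hg2k : MemLp (fun x => g x ^ (2 * k)) 2 μ := by
    refine (memLp_two_iff_integrable_sq (hg.1.fun_pow _)).mpr ?_
    refine hg.integrable_norm_pow'.congr (.of_forall fun x => ?_)
    dsimp only
    rw [Real.norm_eq_abs, Even.pow_abs ⟨2 * k, by ring⟩]
    ring
  calc ∫⁻ x, ENNReal.ofReal (g x ^ (2 * k)) ∂(μ.withDensity fun x => ENNReal.ofReal (f x))
      = ∫⁻ x, ‖g x ^ (2 * k)‖ₑ ∂(μ.withDensity fun x => ENNReal.ofReal (f x)) := by
        simp_rw [ofReal_pow_two_mul, enorm_pow]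
    _ ≤ eLpNorm f 2 μ * eLpNorm (fun x => g x ^ (2 * k)) 2 μ :=
        lintegral_enorm_withDensity_le hf.1 hf0 (hg.1.pow _)
    _ = _ := by
        rw [hf.eLpNorm_two_eq, hg2k.eLpNorm_two_eq, ← ofReal_mul (by positivity)]
        simp_rw [← pow_mul]
        ring_nf

/-- If `μ` is a finite measure satisfying Carleman and `f ∈ L²(μ)` with `f ≥ 0` a.e.,
then the measure `ν = f dμ` satisfies Carleman; in particular every even marginal moment
of `ν` is bounded by `‖f‖_{L²(μ)} (∫ xᵢ^{4k} dμ)^{1/2} < ∞`. -/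
theorem withDensity_carleman (n : ℕ) (μ : Measure (Fin n → ℝ)) [IsFiniteMeasure μ]
    (hC : SatisfiesCarleman n μ)
    (f : (Fin n → ℝ) → ℝ) (hf : MemLp f 2 μ) (hf0 : 0 ≤ᵐ[μ] f) :
    SatisfiesCarleman n (μ.withDensity fun x => ENNReal.ofReal (f x)) ∧
      ∀ (i : Fin n) (k : ℕ),
        ∫⁻ x, ENNReal.ofReal ((x i) ^ (2 * k))
            ∂(μ.withDensity fun x => ENNReal.ofReal (f x)) ≤
          ENNReal.ofReal
            ((∫ x, (f x) ^ 2 ∂μ) ^ ((1 : ℝ) / 2) *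
              (∫ x, (x i) ^ (4 * k) ∂μ) ^ ((1 : ℝ) / 2)) := by
  have hcoord : ∀ i : Fin n, AEStronglyMeasurable (fun x : Fin n → ℝ => x i) μ :=
    fun i => (measurable_pi_apply i).aestronglyMeasurable
  rw [satisfiesCarleman_iff] at hC ⊢
  refine ⟨fun i => ?_, fun i k => ?_⟩
  · exact tsum_inv_eq_top_of_le_mul (by positivity)
      (max_lt one_lt_top hf.eLpNorm_lt_top).ne
      (fun k => eLpNorm_withDensity_ofReal_le hf.1 hf0 (hcoord i) k.succ_ne_zero)
      (tsum_inv_eLpNorm_four_mul_eq_top (hcoord i) (hC i))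
  · exact lintegral_ofReal_pow_withDensity_le hf hf0
      (memLp_of_tsum_inv_eLpNorm_eq_top (hcoord i) (hC i) (natCast_ne_top _))
end

section
/- Let p : ℝⁿ → ℝ be a function satisfying p(x) ≥ a‖x‖^d − b for constants a > 0, b ∈ ℝ and even integer d ≥ 2. Then the measure μ with density e^{-p(x)} with respect to Lebesgue measure on ℝⁿ is finite and satisfies the multivariate Carleman condition. -/
/-!
Since `p(x) ≥ a‖x‖^d - b`, the density is at most `e^b e^{-a‖x‖^d}`. Write `e^{-a r^d}` as
`e^{-a r^d / 2} e^{-a r^d / 2}`: the second factor is integrable, and `u^m ≤ m! e^u` with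
`u = a r^d / 2` bounds `r^{2m}` times the first one by `e^{a/2} m! (2/a)^m`. So the `2m`-th moments
are at most `A m! B^m ≤ (C m)^m`, the `m`-th term of the Carleman series is at least `(C m)^{-1/2}`,
and `∑ m^{-1/2}` diverges.
-/

open MeasureTheory Real
open scoped Nat ENNReal

lemma pow_mul_exp_neg_mul_pow_le {c r : ℝ} (hc : 0 < c) (hr : 0 ≤ r) {j d : ℕ} (hj : j ≤ d)
    (m : ℕ) : r ^ (j * m) * exp (-(c * r ^ d)) ≤ exp c * m ! * c⁻¹ ^ m := by
  have hrj : r ^ j ≤ r ^ d + 1 := by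
    rcases le_total r 1 with h | h
    · linarith [pow_le_one₀ hr h (n := j), pow_nonneg hr d]
    · linarith [pow_le_pow_right₀ h hj]
  have hfac : (c * r ^ j) ^ m ≤ m ! * exp (c * r ^ j) :=
    (div_le_iff₀' (by positivity)).mp (pow_div_factorial_le_exp _ (by positivity) m)
  have hexp : exp (c * r ^ j) ≤ exp c * exp (c * r ^ d) := by
    rw [← exp_add]
    exact exp_le_exp.mpr (by nlinarith)
  have hcancel : exp (c * r ^ d) * exp (-(c * r ^ d)) = 1 := by
    rw [← exp_add, add_neg_cancel, exp_zero]
  calc r ^ (j * m) * exp (-(c * r ^ d))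
      = (c * r ^ j) ^ m * c⁻¹ ^ m * exp (-(c * r ^ d)) := by
        rw [pow_mul, mul_pow, mul_right_comm (c ^ m), ← mul_pow c, mul_inv_cancel₀ hc.ne', one_pow,
          one_mul]
    _ ≤ m ! * (exp c * exp (c * r ^ d)) * c⁻¹ ^ m * exp (-(c * r ^ d)) := by
        gcongr
        exact hfac.trans (by gcongr)
    _ = exp c * m ! * c⁻¹ ^ m := by linear_combination (exp c * m ! * c⁻¹ ^ m) * hcancel

lemma mul_factorial_mul_pow_le (A : ℝ) {B : ℝ} (hB : 0 ≤ B) {m : ℕ} (hm : m ≠ 0) :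
    A * m ! * B ^ m ≤ (max A 1 * B * m) ^ m := by
  have hA : A ≤ max A 1 ^ m := (le_max_left A 1).trans (le_self_pow₀ (le_max_right A 1) hm)
  have hfac : (m ! : ℝ) ≤ (m : ℝ) ^ m := by exact_mod_cast m.factorial_le_pow
  calc A * m ! * B ^ m ≤ max A 1 ^ m * (m : ℝ) ^ m * B ^ m := by gcongr
    _ = (max A 1 * B * m) ^ m := by ring

lemma ENNReal.tsum_natCast_add_one_rpow_neg_eq_top {s : ℝ} (hs : s ≤ 1) :
    ∑' k : ℕ, ((k : ℝ≥0∞) + 1) ^ (-s) = ⊤ := by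
  by_contra h
  have hsum : Summable fun k : ℕ => ((k + 1 : ℕ) : ℝ) ^ (-s) := by
    convert ENNReal.summable_toReal h using 2 with k
    rw [← ENNReal.toReal_rpow]
    norm_cast
  have := Real.summable_nat_rpow.mp
    ((summable_nat_add_iff (f := fun k : ℕ => (k : ℝ) ^ (-s)) 1).mp hsum)
  linarith

lemma ENNReal.rpow_le_rpow_of_nonpos {x y : ℝ≥0∞} {z : ℝ} (hxy : x ≤ y) (hz : z ≤ 0) :
    y ^ z ≤ x ^ z := by
  simpa [ENNReal.rpow_neg] using
    ENNReal.inv_le_inv.mpr (ENNReal.rpow_le_rpow hxy (neg_nonneg.mpr hz))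

theorem tsum_rpow_neg_inv_eq_top_of_le_mul_pow {M : ℕ → ℝ≥0∞} {C : ℝ≥0∞} (hC : C ≠ ⊤)
    (hM : ∀ k : ℕ, M k ≤ (C * (k + 1)) ^ (k + 1)) :
    ∑' k : ℕ, M k ^ (-1 / (2 * ((k : ℝ) + 1))) = ⊤ := by
  have hterm : ∀ k : ℕ, C ^ (-(1 / 2) : ℝ) * ((k : ℝ≥0∞) + 1) ^ (-(1 / 2) : ℝ) ≤
      M k ^ (-1 / (2 * ((k : ℝ) + 1))) := fun k => by
    have hexp : ((k + 1 : ℕ) : ℝ) * (-1 / (2 * ((k : ℝ) + 1))) = -(1 / 2) := by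
      push_cast
      field_simp
    calc C ^ (-(1 / 2) : ℝ) * ((k : ℝ≥0∞) + 1) ^ (-(1 / 2) : ℝ)
        = ((C * (k + 1)) ^ (k + 1)) ^ (-1 / (2 * ((k : ℝ) + 1))) := by
          rw [← ENNReal.rpow_natCast, ← ENNReal.rpow_mul, hexp,
            ENNReal.mul_rpow_of_ne_top hC (by simp)]
      _ ≤ M k ^ (-1 / (2 * ((k : ℝ) + 1))) :=
          ENNReal.rpow_le_rpow_of_nonpos (hM k)
            (div_nonpos_of_nonpos_of_nonneg (by norm_num) (by positivity))
  have hC' : C ^ (-(1 / 2) : ℝ) ≠ 0 := by simp [ENNReal.rpow_eq_zero_iff, hC]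
  refine eq_top_iff.mpr ?_
  calc ⊤ = C ^ (-(1 / 2) : ℝ) * ∑' k : ℕ, ((k : ℝ≥0∞) + 1) ^ (-(1 / 2) : ℝ) := by
        rw [ENNReal.tsum_natCast_add_one_rpow_neg_eq_top (by norm_num), ENNReal.mul_top hC']
    _ = ∑' k : ℕ, C ^ (-(1 / 2) : ℝ) * ((k : ℝ≥0∞) + 1) ^ (-(1 / 2) : ℝ) :=
        ENNReal.tsum_mul_left.symm
    _ ≤ _ := ENNReal.tsum_le_tsum hterm

section Moments

variable {E : Type*} [NormedAddCommGroup E] [NormedSpace ℝ E] [FiniteDimensional ℝ E]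
  [MeasurableSpace E] [BorelSpace E] (μ : Measure E) [μ.IsAddHaarMeasure]

lemma integrable_exp_neg_mul_norm_pow {c : ℝ} (hc : 0 < c) {d : ℕ} (hd : d ≠ 0) :
    Integrable (fun x => exp (-(c * ‖x‖ ^ d))) μ := by
  have hbound : ∀ x : E, ‖exp (-(c * ‖x‖ ^ d))‖ ≤ 1 := fun x => by
    rw [norm_of_nonneg (exp_pos _).le, exp_le_one_iff, neg_nonpos]
    positivity
  have hdecay : ∀ x : E, ‖x‖ ^ (0 + μ.integrablePower) * ‖exp (-(c * ‖x‖ ^ d))‖ ≤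
      exp c * (μ.integrablePower)! * c⁻¹ ^ μ.integrablePower := fun x => by
    have := pow_mul_exp_neg_mul_pow_le hc (norm_nonneg x) (Nat.one_le_iff_ne_zero.mpr hd)
      μ.integrablePower
    simpa only [norm_of_nonneg (exp_pos _).le, zero_add, one_mul] using this
  simpa using integrable_of_le_of_pow_mul_le hbound hdecay (by fun_prop)

theorem exists_lintegral_norm_pow_withDensity_exp_neg_le {p : E → ℝ} (hp : Measurable p)
    {a b : ℝ} (ha : 0 < a) {j d : ℕ} (hj : j ≤ d) (hd : d ≠ 0)
    (hbound : ∀ x, a * ‖x‖ ^ d - b ≤ p x) :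
    ∃ A B : ℝ, 0 ≤ B ∧ ∀ m : ℕ,
      ∫⁻ x, ENNReal.ofReal (‖x‖ ^ (j * m)) ∂(μ.withDensity fun x => ENNReal.ofReal (exp (-p x)))
        ≤ ENNReal.ofReal (A * m ! * B ^ m) := by
  set g : E → ℝ := fun x => exp (-(a / 2 * ‖x‖ ^ d))
  refine ⟨exp b * exp (a / 2) * ∫ x, g x ∂μ, (a / 2)⁻¹, by positivity, fun m => ?_⟩
  set K : ℝ := exp b * exp (a / 2) * m ! * (a / 2)⁻¹ ^ m with hK
  have hpointwise : ∀ x, exp (-p x) * ‖x‖ ^ (j * m) ≤ K * g x := fun x => by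
    have hdensity : exp (-p x) ≤ exp b * g x * g x := by
      rw [← exp_add, ← exp_add]
      exact exp_le_exp.mpr (by linarith [hbound x])
    calc exp (-p x) * ‖x‖ ^ (j * m) ≤ exp b * g x * g x * ‖x‖ ^ (j * m) := by gcongr
      _ = exp b * g x * (‖x‖ ^ (j * m) * g x) := by ring
      _ ≤ exp b * g x * (exp (a / 2) * m ! * (a / 2)⁻¹ ^ m) :=
          mul_le_mul_of_nonneg_left
            (pow_mul_exp_neg_mul_pow_le (half_pos ha) (norm_nonneg x) hj m) (by positivity)
      _ = K * g x := by ring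
  rw [lintegral_withDensity_eq_lintegral_mul _ (f := fun x => ENNReal.ofReal (exp (-p x)))
    (by fun_prop) (by fun_prop)]
  calc _ ≤ ∫⁻ x, ENNReal.ofReal (K * g x) ∂μ := lintegral_mono fun x => by
        rw [Pi.mul_apply, ← ENNReal.ofReal_mul (exp_pos _).le]
        exact ENNReal.ofReal_le_ofReal (hpointwise x)
    _ = ENNReal.ofReal (∫ x, K * g x ∂μ) :=
        (ofReal_integral_eq_lintegral_ofReal
          ((integrable_exp_neg_mul_norm_pow μ (half_pos ha) hd).const_mul K)
          (Filter.Eventually.of_forall fun x => by positivity)).symm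
    _ = _ := by
        rw [integral_const_mul, hK]
        congr 1
        ring

end Moments

theorem gibbs_carleman_general (n : ℕ) (p : EuclideanSpace ℝ (Fin n) → ℝ) (hp : Measurable p)
    (a b : ℝ) (ha : 0 < a) (d : ℕ) (hd2 : 2 ≤ d)
    (hbound : ∀ x, a * ‖x‖ ^ d - b ≤ p x) :
    IsFiniteMeasure (volume.withDensity fun x => ENNReal.ofReal (Real.exp (-p x))) ∧
      ∀ i : Fin n,
        ∑' k : ℕ,
          (∫⁻ x, ENNReal.ofReal ((x i) ^ (2 * (k + 1)))
              ∂(volume.withDensity fun x => ENNReal.ofReal (Real.exp (-p x)))) ^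
            (-1 / (2 * ((k : ℝ) + 1))) = ⊤ := by
  obtain ⟨A, B, hB, hmoment⟩ :=
    exists_lintegral_norm_pow_withDensity_exp_neg_le volume hp ha hd2 (by omega) hbound
  refine ⟨⟨by simpa using (hmoment 0).trans_lt ENNReal.ofReal_lt_top⟩, fun i => ?_⟩
  refine tsum_rpow_neg_inv_eq_top_of_le_mul_pow (C := ENNReal.ofReal (max A 1 * B))
    ENNReal.ofReal_ne_top fun k => ?_
  have hcoord : ∀ x : EuclideanSpace ℝ (Fin n), (x i) ^ (2 * (k + 1)) ≤ ‖x‖ ^ (2 * (k + 1)) :=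
    fun x => by
      rw [pow_mul, pow_mul, ← sq_abs, ← Real.norm_eq_abs]
      gcongr
      exact PiLp.norm_apply_le x i
  calc _ ≤ ∫⁻ x, ENNReal.ofReal (‖x‖ ^ (2 * (k + 1)))
        ∂(volume.withDensity fun x => ENNReal.ofReal (Real.exp (-p x))) :=
        lintegral_mono fun x => ENNReal.ofReal_le_ofReal (hcoord x)
    _ ≤ ENNReal.ofReal (A * (k + 1)! * B ^ (k + 1)) := hmoment (k + 1)
    _ ≤ ENNReal.ofReal ((max A 1 * B * (k + 1 : ℕ)) ^ (k + 1)) :=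
        ENNReal.ofReal_le_ofReal (mul_factorial_mul_pow_le A hB k.succ_ne_zero)
    _ = (ENNReal.ofReal (max A 1 * B) * (k + 1)) ^ (k + 1) := by
        rw [ENNReal.ofReal_pow (by positivity), ENNReal.ofReal_mul (by positivity),
          ENNReal.ofReal_natCast]
        push_cast
        ring

/-- If `p : ℝⁿ → ℝ` satisfies `p(x) ≥ a‖x‖^d − b` with `a > 0` and `d ≥ 2` even, then the
Gibbs measure `e^{-p(x)} dx` is finite and satisfies the multivariate Carleman condition. -/
theorem gibbs_carleman (n : ℕ) (p : EuclideanSpace ℝ (Fin n) → ℝ) (hp : Measurable p)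
    (a b : ℝ) (ha : 0 < a) (d : ℕ) (hd : Even d) (hd2 : 2 ≤ d)
    (hbound : ∀ x, a * ‖x‖ ^ d - b ≤ p x) :
    IsFiniteMeasure (volume.withDensity fun x => ENNReal.ofReal (Real.exp (-p x))) ∧
      ∀ i : Fin n,
        ∑' k : ℕ,
          (∫⁻ x, ENNReal.ofReal ((x i) ^ (2 * (k + 1)))
              ∂(volume.withDensity fun x => ENNReal.ofReal (Real.exp (-p x)))) ^
            (-1 / (2 * ((k : ℝ) + 1))) = ⊤ :=
  gibbs_carleman_general n p hp a b ha d hd2 hbound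
end

section
/- Let μ be a finite measure on ℝⁿ such that polynomials lie in L²(μ) and such that the following holds: any h ∈ L²(μ) with ∫ q² h dμ ≥ 0 for all polynomials q satisfies h ≥ 0 μ-a.e. Then the cone Σ of sums of squares of polynomials is dense, in the L²(μ) norm, in the cone P of globally nonnegative polynomials: for every p ∈ P and ε > 0 there exists s ∈ Σ with ‖p − s‖_{L²(μ)} < ε. -/
/-!
If `p` were not in the `L²(μ)`-closure of the cone of sums of squares, Hilbert-space separation
from this closed convex cone would give `g ∈ L²(μ)` with `⟪s, g⟫ ≥ 0` for every sum of squares `s`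
and `⟪p, g⟫ < 0`. Testing against `s = q²`, Lasserre's hypothesis makes `g ≥ 0` a.e., and then
`⟪p, g⟫ = ∫ p g dμ ≥ 0` since `p ≥ 0`.
-/

open MeasureTheory

theorem IsSumSq.nonneg_smul {A : Type*} [CommSemiring A] [Algebra ℝ A] {t : ℝ} (ht : 0 ≤ t)
    {s : A} (hs : IsSumSq s) : IsSumSq (t • s) := by
  have hsq : algebraMap ℝ A t = algebraMap ℝ A √t * algebraMap ℝ A √t := by
    rw [← map_mul, Real.mul_self_sqrt ht]
  rw [Algebra.smul_def, hsq]
  exact (IsSumSq.mul_self _).mul hs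

variable (A : Type*) [CommSemiring A] [Algebra ℝ A] in
def sumSqCone : PointedCone ℝ A where
  carrier := {s | IsSumSq s}
  zero_mem' := IsSumSq.zero
  add_mem' := IsSumSq.add
  smul_mem' t _ hs := hs.nonneg_smul t.2

namespace MvPolynomial

open scoped ENNReal InnerProductSpace

variable {σ : Type*} {μ : Measure (σ → ℝ)} {r : ℝ≥0∞}

noncomputable def toLp (hpoly : ∀ p : MvPolynomial σ ℝ, MemLp (fun x => eval x p) r μ) :
    MvPolynomial σ ℝ →ₗ[ℝ] Lp ℝ r μ where
  toFun p := (hpoly p).toLp _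
  map_add' p q := by
    rw [← MemLp.toLp_add]
    exact MemLp.toLp_congr _ _ (.of_forall fun x => by simp)
  map_smul' c p := by
    rw [RingHom.id_apply, ← MemLp.toLp_const_smul]
    exact MemLp.toLp_congr _ _ (.of_forall fun x => by simp [smul_eval])

theorem edist_toLp (hpoly : ∀ p : MvPolynomial σ ℝ, MemLp (fun x => eval x p) r μ)
    (p q : MvPolynomial σ ℝ) :
    edist (toLp hpoly p) (toLp hpoly q) = eLpNorm (fun x => eval x p - eval x q) r μ :=
  Lp.edist_toLp_toLp _ _ (hpoly p) (hpoly q)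

theorem inner_toLp (hpoly : ∀ p : MvPolynomial σ ℝ, MemLp (fun x => eval x p) 2 μ)
    (p : MvPolynomial σ ℝ) (g : Lp ℝ 2 μ) :
    ⟪toLp hpoly p, g⟫_ℝ = ∫ x, eval x p * g x ∂μ := by
  rw [L2.inner_def]
  refine integral_congr_ae ?_
  filter_upwards [(hpoly p).coeFn_toLp] with x hx
  rw [real_inner_eq_re_inner, RCLike.inner_apply]
  simp [toLp, hx, mul_comm]

theorem toLp_mem_closure_sumSqCone
    (hpoly : ∀ p : MvPolynomial σ ℝ, MemLp (fun x => eval x p) 2 μ)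
    (hlasserre : ∀ h : (σ → ℝ) → ℝ, MemLp h 2 μ →
      (∀ q : MvPolynomial σ ℝ, 0 ≤ ∫ x, (eval x q) ^ 2 * h x ∂μ) → 0 ≤ᵐ[μ] h)
    {p : MvPolynomial σ ℝ} (hp : ∀ x, 0 ≤ eval x p) :
    toLp hpoly p ∈ closure ((sumSqCone _).map (toLp hpoly) : Set (Lp ℝ 2 μ)) := by
  by_contra hnot
  obtain ⟨g, hg_dual, hgp⟩ :=
    ProperCone.hyperplane_separation' (Submodule.closure ((sumSqCone _).map (toLp hpoly))) hnot
  have hg : 0 ≤ᵐ[μ] g := hlasserre g (Lp.memLp g) fun q => by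
    have := hg_dual _ (subset_closure ⟨q * q, IsSumSq.mul_self q, rfl⟩)
    simpa [inner_toLp, sq, mul_assoc] using this
  refine hgp.not_ge ?_
  rw [inner_toLp]
  exact integral_nonneg_of_ae (hg.mono fun x hx => mul_nonneg (hp x) hx)

end MvPolynomial

theorem sos_dense_in_nonneg_general (n : ℕ) (μ : Measure (Fin n → ℝ))
    (hpoly : ∀ p : MvPolynomial (Fin n) ℝ, MemLp (fun x => MvPolynomial.eval x p) 2 μ)
    (hlasserre : ∀ h : (Fin n → ℝ) → ℝ, MemLp h 2 μ →
      (∀ q : MvPolynomial (Fin n) ℝ, 0 ≤ ∫ x, (MvPolynomial.eval x q) ^ 2 * h x ∂μ) →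
      0 ≤ᵐ[μ] h)
    (p : MvPolynomial (Fin n) ℝ) (hpnn : ∀ x, 0 ≤ MvPolynomial.eval x p)
    (ε : ℝ) (hε : 0 < ε) :
    ∃ s : MvPolynomial (Fin n) ℝ, IsSumSq s ∧
      eLpNorm (fun x => MvPolynomial.eval x p - MvPolynomial.eval x s) 2 μ <
        ENNReal.ofReal ε := by
  obtain ⟨_, ⟨s, hs, rfl⟩, hclose⟩ := EMetric.mem_closure_iff.1
    (MvPolynomial.toLp_mem_closure_sumSqCone hpoly hlasserre hpnn) _ (ENNReal.ofReal_pos.2 hε)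
  exact ⟨s, hs, MvPolynomial.edist_toLp hpoly p s ▸ hclose⟩

/-- Sums of squares of polynomials are dense, in `L²(μ)` norm, in the cone of globally
nonnegative polynomials, provided polynomials lie in `L²(μ)` and Lasserre's lemma holds
(any `h ∈ L²(μ)` with `∫ q² h dμ ≥ 0` for all polynomials `q` is nonnegative a.e.). -/
theorem sos_dense_in_nonneg (n : ℕ) (μ : Measure (Fin n → ℝ)) [IsFiniteMeasure μ]
    (hpoly : ∀ p : MvPolynomial (Fin n) ℝ, MemLp (fun x => MvPolynomial.eval x p) 2 μ)
    (hlasserre : ∀ h : (Fin n → ℝ) → ℝ, MemLp h 2 μ →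
      (∀ q : MvPolynomial (Fin n) ℝ, 0 ≤ ∫ x, (MvPolynomial.eval x q) ^ 2 * h x ∂μ) →
      0 ≤ᵐ[μ] h)
    (p : MvPolynomial (Fin n) ℝ) (hpnn : ∀ x, 0 ≤ MvPolynomial.eval x p)
    (ε : ℝ) (hε : 0 < ε) :
    ∃ s : MvPolynomial (Fin n) ℝ, IsSumSq s ∧
      eLpNorm (fun x => MvPolynomial.eval x p - MvPolynomial.eval x s) 2 μ <
        ENNReal.ofReal ε :=
  sos_dense_in_nonneg_general n μ hpoly hlasserre p hpnn ε hε
end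

section
/- There do not exist sums of squares s₀, s₁, s₂ ∈ ℝ[x] such that x = s₀(x) + s₁(x)·x³ + s₂(x)·(1 − x²) identically. In other words, the polynomial x does not belong to the quadratic module generated by x³ and 1 − x², even though x ≥ 0 on the set K = {x : x³ ≥ 0, 1 − x² ≥ 0} = [0,1]. -/
/-!
Evaluating `x = s₀ + s₁·x³ + s₂·(1 − x²)` at `0` gives `s₀(0) + s₂(0) = 0`, so both sums of
squares vanish at `0`, hence to order two. Then `x²` divides the right-hand side but not `x`.
-/

open Polynomial

theorem IsSumSq.map {R S F : Type*} [NonAssocSemiring R] [NonAssocSemiring S]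
    [FunLike F R S] [RingHomClass F R S] (f : F) {s : R} (hs : IsSumSq s) : IsSumSq (f s) := by
  induction hs with
  | zero => simp
  | sq_add a _ ih => simpa using IsSumSq.sq_add (f a) ih

namespace Polynomial

variable {R : Type*} [CommRing R] [LinearOrder R] [IsStrictOrderedRing R]

theorem IsSumSq.eval_nonneg {s : R[X]} (hs : IsSumSq s) (a : R) : 0 ≤ s.eval a :=
  (hs.map (evalRingHom a)).nonneg

theorem IsSumSq.sq_dvd_of_isRoot {s : R[X]} (hs : IsSumSq s) {a : R} (ha : s.IsRoot a) :
    (X - C a) ^ 2 ∣ s := by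
  induction hs with
  | zero => exact dvd_zero _
  | @sq_add p t ht ih =>
    have hsum : p.eval a * p.eval a + t.eval a = 0 := by simpa using ha
    obtain ⟨hp, ht₀⟩ :=
      (add_eq_zero_iff_of_nonneg (mul_self_nonneg _) (ht.eval_nonneg a)).1 hsum
    have hXp : X - C a ∣ p := dvd_iff_isRoot.2 (mul_self_eq_zero.1 hp)
    exact dvd_add (sq (X - C a) ▸ mul_dvd_mul hXp hXp) (ih ht₀)

end Polynomial

/-- The polynomial `x` does not belong to the quadratic module generated by `x³` and
`1 − x²`: there are no sums of squares `s₀, s₁, s₂ ∈ ℝ[x]` with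
`x = s₀ + s₁·x³ + s₂·(1 − x²)`, even though `x ≥ 0` on `K = [0,1]`. -/
theorem x_not_in_quadratic_module :
    ¬ ∃ s₀ s₁ s₂ : Polynomial ℝ, IsSumSq s₀ ∧ IsSumSq s₁ ∧ IsSumSq s₂ ∧
      (X : Polynomial ℝ) = s₀ + s₁ * X ^ 3 + s₂ * (1 - X ^ 2) := by
  rintro ⟨s₀, s₁, s₂, h₀, -, h₂, hX⟩
  have hsum : s₀.eval 0 + s₂.eval 0 = 0 := by simpa using (congrArg (eval 0) hX).symm
  obtain ⟨hs₀, hs₂⟩ := (add_eq_zero_iff_of_nonneg (h₀.eval_nonneg 0) (h₂.eval_nonneg 0)).1 hsum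
  have hX₀ : X ^ 2 ∣ s₀ := by simpa using h₀.sq_dvd_of_isRoot hs₀
  have hX₂ : X ^ 2 ∣ s₂ := by simpa using h₂.sq_dvd_of_isRoot hs₂
  have hX₁ : X ^ 2 ∣ s₁ * X ^ 3 := dvd_mul_of_dvd_right (pow_dvd_pow X (by norm_num)) s₁
  have hdvd : X ^ 2 ∣ s₀ + s₁ * X ^ 3 + s₂ * (1 - X ^ 2) :=
    dvd_add (dvd_add hX₀ hX₁) (dvd_mul_of_dvd_left hX₂ _)
  rw [← hX] at hdvd
  simpa using X_pow_dvd_iff.1 hdvd 1 (by norm_num)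
end
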